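/- arXiv:1704.08472 — 2 statements merged into one kernel-verified Lean document; each statement's English description precedes it below -/
import Mathlib

section
/- Let G be a finite simple graph on n ≥ 2 vertices and let v be a vertex of maximum degree in G. Then either f(G) = diff(G), or v belongs to every minimum 2-equating set of G (in the latter case v is the unique vertex of maximum degree). -/
open Finset

variable {V : Type*}

open scoped Classical in
/-- Degree of `v` in the subgraph of `G` induced on the vertex set `A`
(number of neighbours of `v` inside `A`). -/
noncomputable def degOn (G : SimpleGraph V) (A : Finset V) (v : V) : ℕ :=
  (A.filter fun w => G.Adj v w).card

/-- Maximum degree of the subgraph of `G` induced on `A`. -/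
noncomputable def maxDegOn (G : SimpleGraph V) (A : Finset V) : ℕ :=
  A.sup (degOn G A)

open scoped Classical in
/-- The subgraph of `G` induced on `A` has fewer than `k` vertices or at least `k`
vertices realising its maximum degree. -/
def equates (G : SimpleGraph V) (k : ℕ) (A : Finset V) : Prop :=
  A.card < k ∨ k ≤ (A.filter fun v => degOn G A v = maxDegOn G A).card

open scoped Classical in
/-- `f_k` of the subgraph of `G` induced on `A`: the minimum number of vertices of `A`
whose deletion leaves an induced subgraph with fewer than `k` vertices or with at
least `k` vertices realising its maximum degree. -/
noncomputable def fkOn (G : SimpleGraph V) (k : ℕ) (A : Finset V) : ℕ :=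
  sInf {m | ∃ S, S ⊆ A ∧ S.card = m ∧ equates G k (A \ S)}

/-- `f_k(G)`. -/
noncomputable def fk [Fintype V] (G : SimpleGraph V) (k : ℕ) : ℕ :=
  fkOn G k Finset.univ

/-- `diff` of the subgraph of `G` induced on `A`: the largest degree minus the
second-largest degree (with multiplicity) of this subgraph. -/
noncomputable def diffOn (G : SimpleGraph V) (A : Finset V) : ℕ :=
  maxDegOn G A - ((A.val.map (degOn G A)).erase (maxDegOn G A)).sup

/-- `diff(G) = d₁ - d₂`, the difference between the largest and second-largest
vertex degrees of `G`. -/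
noncomputable def diffDeg [Fintype V] (G : SimpleGraph V) : ℕ :=
  diffOn G Finset.univ

/-!
Let `v` have maximum degree `D` and let `u` attain the largest degree `d₂` among the other
vertices. Since `v` is not its own neighbour, `N(v) ∩ N[u]` has at most `d₂` elements, so `v` has
at least `D - d₂` neighbours outside `N[u]`; deleting `D - d₂` of them brings `v` down to degree
`d₂` without touching `u`, hence `f(G) ≤ diff(G)` always. Conversely, if a 2-equating set `S`
misses `v`, then `v` keeps degree at least `D - |S|` while some other vertex realises the new
maximum with degree at most `d₂`, so `|S| ≥ D - d₂`. If `v` is not the unique vertex of maximum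
degree, then `diff(G) = 0`.
-/

open scoped Classical

section degOn

variable {V : Type*} (G : SimpleGraph V)

lemma degOn_sdiff [DecidableEq V] (A S : Finset V) (w : V) :
    degOn G (A \ S) w = (A.filter (G.Adj w) \ S).card := by
  unfold degOn
  congr 1
  ext x
  simp only [mem_filter, mem_sdiff]
  tauto

lemma degOn_mono {A B : Finset V} (h : A ⊆ B) (w : V) : degOn G A w ≤ degOn G B w :=
  card_le_card (filter_subset_filter _ h)

lemma equates_two_of_pair_attains_max {A : Finset V} {u v : V} (hu : u ∈ A) (hv : v ∈ A) (huv : u ≠ v)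
    (hmax : ∀ w ∈ A, degOn G A w ≤ degOn G A u) (hvu : degOn G A v = degOn G A u) :
    equates G 2 A := by
  have hmaxDeg : maxDegOn G A = degOn G A u := le_antisymm (Finset.sup_le hmax) (le_sup hu)
  refine Or.inr ((card_pair huv).symm.le.trans (card_le_card ?_))
  intro w hw
  rcases mem_insert.mp hw with rfl | hw
  · exact mem_filter.mpr ⟨hu, hmaxDeg.symm⟩
  · rw [mem_singleton.mp hw]
    exact mem_filter.mpr ⟨hv, hvu.trans hmaxDeg.symm⟩

end degOn

section univ

variable {V : Type*} [Fintype V] (G : SimpleGraph V)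

lemma degOn_univ_le_card_sub_one (v : V) : degOn G univ v ≤ Fintype.card V - 1 := by
  have hsub : univ.filter (G.Adj v) ⊆ univ.erase v := fun w hw =>
    mem_erase.mpr ⟨(G.ne_of_adj (mem_filter.mp hw).2).symm, mem_univ w⟩
  have := card_le_card hsub
  rwa [card_erase_of_mem (mem_univ v), card_univ] at this

lemma fk_le_card [DecidableEq V] {k : ℕ} {S : Finset V} (h : equates G k (univ \ S)) :
    fk G k ≤ S.card :=
  Nat.sInf_le ⟨S, subset_univ S, rfl, by convert h⟩

lemma diffDeg_eq [DecidableEq V] {v : V} (hv : ∀ w, degOn G univ w ≤ degOn G univ v) :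
    diffDeg G = degOn G univ v - (univ.erase v).sup (degOn G univ) := by
  have hmax : maxDegOn G univ = degOn G univ v :=
    le_antisymm (Finset.sup_le fun w _ => hv w) (le_sup (mem_univ v))
  have huniv : (univ : Finset V).val = v ::ₘ (univ.erase v).val := by
    rw [erase_val]
    exact (Multiset.cons_erase (mem_univ v)).symm
  unfold diffDeg diffOn
  rw [hmax, huniv, Multiset.map_cons, Multiset.erase_cons_head, sup_def]

lemma diffDeg_eq_zero_of_ne {v w : V} (hv : ∀ w, degOn G univ w ≤ degOn G univ v) (hwv : w ≠ v)
    (hw : degOn G univ w = degOn G univ v) : diffDeg G = 0 := by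
  rw [diffDeg_eq G hv]
  exact Nat.sub_eq_zero_of_le (hw ▸ le_sup (mem_erase.mpr ⟨hwv, mem_univ w⟩))

lemma card_neighbors_inter_insert_le [DecidableEq V] (u v : V) :
    (univ.filter (G.Adj v) ∩ insert u (univ.filter (G.Adj u))).card ≤ degOn G univ u := by
  by_cases hadj : G.Adj u v
  · have hvNu : v ∈ univ.filter (G.Adj u) := mem_filter.mpr ⟨mem_univ v, hadj⟩
    have hsub : univ.filter (G.Adj v) ∩ insert u (univ.filter (G.Adj u)) ⊆
        insert u ((univ.filter (G.Adj u)).erase v) := by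
      intro w hw
      obtain ⟨hvw, hw⟩ := mem_inter.mp hw
      rcases mem_insert.mp hw with rfl | huw
      · exact mem_insert_self _ _
      · exact mem_insert_of_mem (mem_erase.mpr ⟨(G.ne_of_adj (mem_filter.mp hvw).2).symm, huw⟩)
    calc _ ≤ _ := card_le_card hsub
      _ ≤ ((univ.filter (G.Adj u)).erase v).card + 1 := card_insert_le _ _
      _ = degOn G univ u := by
        rw [card_erase_of_mem hvNu]
        exact Nat.sub_add_cancel (card_pos.mpr ⟨v, hvNu⟩)
  · refine card_le_card fun w hw => ?_
    obtain ⟨hvw, hw⟩ := mem_inter.mp hw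
    rcases mem_insert.mp hw with rfl | huw
    · exact absurd (G.adj_symm (mem_filter.mp hvw).2) hadj
    · exact huw

lemma exists_equates_two_card_eq [DecidableEq V] {u v : V} (huv : u ≠ v)
    (hu : ∀ w ≠ v, degOn G univ w ≤ degOn G univ u) (hle : degOn G univ u ≤ degOn G univ v) :
    ∃ T : Finset V, T.card = degOn G univ v - degOn G univ u ∧ equates G 2 (univ \ T) := by
  set Nv := univ.filter (G.Adj v)
  set Nu := univ.filter (G.Adj u)
  have hNv : Nv.card = degOn G univ v := rfl
  have hcard : degOn G univ v - degOn G univ u ≤ (Nv \ insert u Nu).card := by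
    have hsdiff := le_card_sdiff (Nv ∩ insert u Nu) Nv
    rw [sdiff_inter_self_left, hNv] at hsdiff
    exact (Nat.sub_le_sub_left (card_neighbors_inter_insert_le G u v) _).trans hsdiff
  obtain ⟨T, hT, hTcard⟩ := exists_subset_card_eq hcard
  have hTNv : T ⊆ Nv := hT.trans sdiff_subset
  have hvT : v ∉ T := fun h => G.irrefl (mem_filter.mp (hTNv h)).2
  have huT : u ∉ T := fun h => (mem_sdiff.mp (hT h)).2 (mem_insert_self u Nu)
  have hdegv : degOn G (univ \ T) v = degOn G univ u := by
    rw [degOn_sdiff, card_sdiff_of_subset hTNv, hTcard, hNv]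
    omega
  have hdegu : degOn G (univ \ T) u = degOn G univ u := by
    rw [degOn_sdiff, sdiff_eq_self_of_disjoint (disjoint_right.mpr fun w hw hNu =>
      (mem_sdiff.mp (hT hw)).2 (mem_insert_of_mem hNu))]
    rfl
  refine ⟨T, hTcard, equates_two_of_pair_attains_max G (mem_sdiff.mpr ⟨mem_univ u, huT⟩)
    (mem_sdiff.mpr ⟨mem_univ v, hvT⟩) huv (fun w _ => ?_) (hdegv.trans hdegu.symm)⟩
  rw [hdegu]
  rcases eq_or_ne w v with rfl | hwv
  · exact hdegv.le
  · exact (degOn_mono G sdiff_subset w).trans (hu w hwv)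

lemma fk_two_le_diffDeg : fk G 2 ≤ diffDeg G := by
  rcases lt_or_ge (Fintype.card V) 2 with hn | hn
  · exact (fk_le_card G (S := ∅) (Or.inl (by rwa [sdiff_empty, card_univ]))).trans
      (card_empty.trans_le (Nat.zero_le _))
  have : Nonempty V := Fintype.card_pos_iff.mp (by omega)
  obtain ⟨v, -, hv⟩ := exists_max_image univ (degOn G univ) univ_nonempty
  have hne : (univ.erase v).Nonempty := by
    rw [← card_pos, card_erase_of_mem (mem_univ v), card_univ]
    omega
  obtain ⟨u, hu, hsup⟩ := exists_mem_eq_sup _ hne (degOn G univ)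
  obtain ⟨T, hTcard, hT⟩ := exists_equates_two_card_eq G (mem_erase.mp hu).1
    (fun w hwv => hsup ▸ le_sup (mem_erase.mpr ⟨hwv, mem_univ w⟩)) (hv u (mem_univ u))
  rw [diffDeg_eq G fun w => hv w (mem_univ w), hsup, ← hTcard]
  exact fk_le_card G hT

lemma diffDeg_le_card_of_equates [DecidableEq V] {v : V}
    (hv : ∀ w, degOn G univ w ≤ degOn G univ v) {S : Finset V} (hS : equates G 2 (univ \ S))
    (hvS : v ∉ S) : diffDeg G ≤ S.card := by
  rw [diffDeg_eq G hv]
  rcases hS with hsmall | hbig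
  · rw [card_sdiff_of_subset (subset_univ S), card_univ] at hsmall
    have := degOn_univ_le_card_sub_one G v
    omega
  · obtain ⟨x, hx, hxv⟩ := exists_mem_ne (one_lt_two.trans_le hbig) v
    obtain ⟨-, hxmax⟩ := mem_filter.mp hx
    suffices degOn G univ v - S.card ≤ (univ.erase v).sup (degOn G univ) by omega
    calc degOn G univ v - S.card ≤ degOn G (univ \ S) v := (degOn_sdiff G univ S v).symm ▸
          le_card_sdiff S _
      _ ≤ degOn G (univ \ S) x := hxmax ▸ le_sup (mem_sdiff.mpr ⟨mem_univ v, hvS⟩)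
      _ ≤ degOn G univ x := degOn_mono G sdiff_subset x
      _ ≤ (univ.erase v).sup (degOn G univ) := le_sup (mem_erase.mpr ⟨hxv, mem_univ x⟩)

end univ

theorem stmt1_general {V : Type*} [Fintype V] [DecidableEq V] (G : SimpleGraph V)
    (v : V) (hv : ∀ w, degOn G Finset.univ w ≤ degOn G Finset.univ v) :
    fk G 2 = diffDeg G ∨
      ((∀ S : Finset V, S.card = fk G 2 → equates G 2 (Finset.univ \ S) → v ∈ S) ∧
        (∀ w, degOn G Finset.univ w = degOn G Finset.univ v → w = v)) := by
  refine or_iff_not_imp_right.mpr fun h => le_antisymm (fk_two_le_diffDeg G) ?_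
  rcases not_and_or.mp h with hS | hunique
  · push Not at hS
    obtain ⟨S, hScard, hS, hvS⟩ := hS
    exact hScard ▸ diffDeg_le_card_of_equates G hv hS hvS
  · push Not at hunique
    obtain ⟨w, hw, hwv⟩ := hunique
    exact (diffDeg_eq_zero_of_ne G hv hwv hw).trans_le (Nat.zero_le _)

/-- For a graph `G` on `n ≥ 2` vertices and `v` a vertex of maximum
degree, either `f(G) = diff(G)`, or `v` belongs to every minimum 2-equating set of `G`
(and in the latter case `v` is the unique vertex of maximum degree). -/
theorem stmt1 {V : Type*} [Fintype V] [DecidableEq V] (G : SimpleGraph V)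
    (hn : 2 ≤ Fintype.card V)
    (v : V) (hv : ∀ w, degOn G Finset.univ w ≤ degOn G Finset.univ v) :
    fk G 2 = diffDeg G ∨
      ((∀ S : Finset V, S.card = fk G 2 → equates G 2 (Finset.univ \ S) → v ∈ S) ∧
        (∀ w, degOn G Finset.univ w = degOn G Finset.univ v → w = v)) :=
  stmt1_general G v hv
end

section
/- For every integer t ≥ 1 and every integer Δ with C(t+1,2) + 1 ≤ Δ ≤ C(t+2,2) (where C(m,2) = m(m−1)/2), there exists a finite simple graph G with maximum degree exactly Δ such that f(G) = t. (One such graph is the disjoint union of the stars K_{1,a_j} for j = 1, …, t−1, where a_j = C(j+1,2) + 1, together with the star K_{1,Δ}.) -/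
open Finset

variable {V : Type*}

/-!
The graph is a disjoint union of stars with centres `0, …, t-1`, star `i` having `b i` leaves,
where `b i + j < b j` for `i < j` and `j + 2 ≤ b j`. Deleting the `t` centres leaves an edgeless
graph, so `f ≤ t`. If fewer than `t` vertices are deleted, some centre survives; the largest
surviving centre `j` has lost at most `j` leaves, since the deleted centres above it use up the
rest of the budget. Its degree is then at least `b j - j ≥ 2`, more than that of any smaller
centre or any leaf, so the maximum degree is attained only once and `f ≥ t`.
-/

namespace SimpleGraph

section iso

variable {W : Type*} {G : SimpleGraph V} {G' : SimpleGraph W}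

lemma degOn_map_iso (e : G ≃g G') (A : Finset V) (v : V) :
    degOn G' (A.map e.toEquiv.toEmbedding) (e v) = degOn G A v := by
  classical
  rw [degOn, degOn, filter_map, card_map]
  congr 1
  exact filter_congr fun w _ => e.map_adj_iff

lemma maxDegOn_map_iso (e : G ≃g G') (A : Finset V) :
    maxDegOn G' (A.map e.toEquiv.toEmbedding) = maxDegOn G A := by
  rw [maxDegOn, sup_map]
  exact sup_congr rfl fun v _ => degOn_map_iso e A v

lemma equates_map_iso (e : G ≃g G') (k : ℕ) (A : Finset V) :
    equates G' k (A.map e.toEquiv.toEmbedding) ↔ equates G k A := by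
  classical
  rw [equates, equates, card_map, filter_map, card_map]
  congr! 3
  exact filter_congr fun v _ =>
    Iff.of_eq (congrArg₂ (· = ·) (degOn_map_iso e A v) (maxDegOn_map_iso e A))

lemma fkOn_map_iso (e : G ≃g G') (k : ℕ) (A : Finset V) :
    fkOn G' k (A.map e.toEquiv.toEmbedding) = fkOn G k A := by
  classical
  unfold fkOn
  congr 1
  ext m
  constructor
  · rintro ⟨S', hS', rfl, h⟩
    obtain ⟨S, hS, rfl⟩ := subset_map_iff.1 hS'
    refine ⟨S, hS, (card_map _).symm, ?_⟩
    rwa [← Finset.map_sdiff, equates_map_iso] at h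
  · rintro ⟨S, hS, rfl, h⟩
    refine ⟨S.map e.toEquiv.toEmbedding, map_subset_map.2 hS, card_map _, ?_⟩
    rwa [← Finset.map_sdiff, equates_map_iso]

lemma maxDegOn_univ_eq_of_iso [Fintype V] [Fintype W] (e : G ≃g G') :
    maxDegOn G' univ = maxDegOn G univ := by
  rw [← maxDegOn_map_iso e, map_univ_equiv]

lemma fk_eq_of_iso [Fintype V] [Fintype W] (e : G ≃g G') (k : ℕ) : fk G' k = fk G k := by
  rw [fk, fk, ← fkOn_map_iso e, map_univ_equiv]

end iso

section degOn

variable {G : SimpleGraph V} {A B : Finset V} {v : V}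

lemma degOn_mono (h : A ⊆ B) (v : V) : degOn G A v ≤ degOn G B v := by
  classical
  exact card_le_card (filter_subset_filter _ h)

lemma degOn_le_card (A : Finset V) (v : V) : degOn G A v ≤ #A := by
  classical
  exact card_filter_le _ _

lemma degOn_le_degOn_sdiff_add [DecidableEq V] (A S : Finset V) (v : V) :
    degOn G A v ≤ degOn G (A \ S) v + degOn G S v := by
  classical
  unfold degOn
  calc #(A.filter (G.Adj v)) ≤ #((A \ S).filter (G.Adj v) ∪ S.filter (G.Adj v)) := by
        rw [← filter_union]
        exact card_le_card (filter_subset_filter _ le_sdiff_sup)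
    _ ≤ _ := card_union_le _ _

lemma degOn_le_maxDegOn (hv : v ∈ A) : degOn G A v ≤ maxDegOn G A := le_sup hv

lemma maxDegOn_eq_of_forall_le (hv : v ∈ A) (h : ∀ w ∈ A, degOn G A w ≤ degOn G A v) :
    maxDegOn G A = degOn G A v :=
  le_antisymm (Finset.sup_le h) (degOn_le_maxDegOn hv)

lemma not_equates_two_of_forall_degOn_lt (hA : 2 ≤ #A) (hv : v ∈ A)
    (hlt : ∀ w ∈ A, w ≠ v → degOn G A w < degOn G A v) : ¬ equates G 2 A := by
  classical
  have hmax : maxDegOn G A = degOn G A v := maxDegOn_eq_of_forall_le hv fun w hw =>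
    (eq_or_ne w v).elim (fun h => h ▸ le_rfl) fun h => (hlt w hw h).le
  have hunique : #(A.filter fun w => degOn G A w = maxDegOn G A) ≤ 1 :=
    card_le_one.2 fun x hx y hy => by
      simp only [mem_filter, hmax] at hx hy
      by_contra hxy
      rcases eq_or_ne x v with rfl | hxv
      · exact (hlt y hy.1 (Ne.symm hxy)).ne hy.2
      · exact (hlt x hx.1 hxv).ne hx.2
  unfold equates
  omega

lemma equates_of_forall_not_adj (k : ℕ) (h : ∀ v ∈ A, ∀ w ∈ A, ¬ G.Adj v w) : equates G k A := by
  classical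
  have hdeg : ∀ v ∈ A, degOn G A v = 0 := fun v hv =>
    card_eq_zero.2 (filter_eq_empty_iff.2 fun w hw => h v hv w hw)
  have hmax : maxDegOn G A = 0 := Nat.eq_zero_of_le_zero (Finset.sup_le fun v hv => (hdeg v hv).le)
  rw [equates, filter_true_of_mem fun v hv => by rw [hdeg v hv, hmax]]
  exact lt_or_ge _ _

lemma fkOn_eq_card [DecidableEq V] {k : ℕ} {S : Finset V} (hS : S ⊆ A)
    (h : equates G k (A \ S)) (hmin : ∀ T ⊆ A, #T < #S → ¬ equates G k (A \ T)) :
    fkOn G k A = #S := by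
  obtain rfl : ‹DecidableEq V› = fun a b => Classical.propDecidable (a = b) :=
    Subsingleton.elim _ _
  refine le_antisymm (Nat.sInf_le ⟨S, hS, rfl, h⟩) (le_csInf ⟨_, S, hS, rfl, h⟩ ?_)
  rintro _ ⟨T, hT, rfl, hTeq⟩
  by_contra hlt
  exact hmin T hT (not_le.1 hlt) hTeq

end degOn

section starForest

variable {t : ℕ} (b : Fin t → ℕ)

def starForest : SimpleGraph (Fin t ⊕ Σ i, Fin (b i)) where
  Adj
    | .inl i, .inr p => p.1 = i
    | .inr p, .inl i => p.1 = i
    | _, _ => False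
  symm := ⟨by rintro (i | p) (j | q) h <;> exact h⟩
  loopless := ⟨by rintro (i | p) h <;> exact h⟩

variable {b}

@[simp] lemma starForest_adj_inl_inr {i : Fin t} {p : Σ i, Fin (b i)} :
    (starForest b).Adj (.inl i) (.inr p) ↔ p.1 = i := Iff.rfl

@[simp] lemma starForest_adj_inr_inl {i : Fin t} {p : Σ i, Fin (b i)} :
    (starForest b).Adj (.inr p) (.inl i) ↔ p.1 = i := Iff.rfl

@[simp] lemma not_starForest_adj_inl_inl {i j : Fin t} : ¬ (starForest b).Adj (.inl i) (.inl j) :=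
  id

@[simp] lemma not_starForest_adj_inr_inr {p q : Σ i, Fin (b i)} :
    ¬ (starForest b).Adj (.inr p) (.inr q) :=
  id

lemma degOn_starForest_univ_inl (i : Fin t) : degOn (starForest b) univ (.inl i) = b i := by
  classical
  have : univ.filter ((starForest b).Adj (.inl i)) =
      univ.map ((Function.Embedding.sigmaMk i).trans .inr) := by
    ext (j | ⟨j, k⟩)
    · simp
    · simp only [mem_filter, mem_univ, true_and, starForest_adj_inl_inr, mem_map,
        Function.Embedding.trans_apply, Function.Embedding.sigmaMk_apply,
        Function.Embedding.inr_apply, Sum.inr.injEq]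
      exact ⟨by rintro rfl; exact ⟨k, rfl⟩, by rintro ⟨k, h⟩; cases h; rfl⟩
  rw [degOn, this, card_map, card_univ, Fintype.card_fin]

lemma degOn_starForest_inr_le_one (A : Finset _) (p : Σ i, Fin (b i)) :
    degOn (starForest b) A (.inr p) ≤ 1 := by
  classical
  refine card_le_one.2 ?_
  rintro (i | q) hi (j | r) hj <;> simp_all

lemma exists_max_centre_not_mem {S : Finset (Fin t ⊕ Σ i, Fin (b i))} (hS : #S < t) :
    ∃ j, .inl j ∉ S ∧ ∀ i, j < i → .inl i ∈ S := by
  classical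
  have hne : (univ.filter fun i : Fin t => .inl i ∉ S).Nonempty := by
    by_contra h
    rw [not_nonempty_iff_eq_empty, filter_eq_empty_iff] at h
    have : univ.map .inl ⊆ S := fun w hw => by
      obtain ⟨i, -, rfl⟩ := mem_map.1 hw
      exact not_not.1 (h (mem_univ i))
    simpa using (card_le_card this).trans_lt hS
  obtain ⟨j, hj, hmax⟩ := exists_max_image _ id hne
  refine ⟨j, (mem_filter.1 hj).2, fun i hji => ?_⟩
  by_contra hi
  exact (hmax i (mem_filter.2 ⟨mem_univ i, hi⟩)).not_gt hji

lemma le_degOn_starForest_sdiff {S : Finset (Fin t ⊕ Σ i, Fin (b i))} (hS : #S < t) {j : Fin t}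
    (hj : ∀ i, j < i → .inl i ∈ S) : b j ≤ degOn (starForest b) (univ \ S) (.inl j) + j := by
  classical
  have hsplit := degOn_le_degOn_sdiff_add (G := starForest b) univ S (.inl j)
  rw [degOn_starForest_univ_inl] at hsplit
  have hnonadj : (Ioi j).map .inl ⊆ S.filter fun w => ¬ (starForest b).Adj (.inl j) w := by
    intro w hw
    obtain ⟨i, hi, rfl⟩ := mem_map.1 hw
    exact mem_filter.2 ⟨hj i (mem_Ioi.1 hi), not_starForest_adj_inl_inl (b := b)⟩
  have hcount : degOn (starForest b) S (.inl j) +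
      #(S.filter fun w => ¬ (starForest b).Adj (.inl j) w) = #S :=
    card_filter_add_card_filter_not _
  have := card_le_card hnonadj
  rw [card_map, Fin.card_Ioi] at this
  have := j.isLt
  omega

lemma not_equates_starForest_sdiff (hgap : ∀ i j : Fin t, i < j → b i + j < b j)
    (hbig : ∀ j : Fin t, j + 2 ≤ b j) {S : Finset (Fin t ⊕ Σ i, Fin (b i))} (hS : #S < t) :
    ¬ equates (starForest b) 2 (univ \ S) := by
  obtain ⟨j, hjS, hj⟩ := exists_max_centre_not_mem hS
  have hdeg := le_degOn_starForest_sdiff hS hj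
  have hbj := hbig j
  refine not_equates_two_of_forall_degOn_lt ?_ (mem_sdiff.2 ⟨mem_univ _, hjS⟩) ?_
  · have := degOn_le_card (G := starForest b) (univ \ S) (.inl j)
    omega
  rintro (i | p) hw hne
  · have hij : i < j := lt_of_le_of_ne
      (not_lt.1 fun hji => (mem_sdiff.1 hw).2 (hj i hji)) (fun h => hne (h ▸ rfl))
    have := degOn_mono (G := starForest b) (subset_univ (univ \ S)) (.inl i)
    rw [degOn_starForest_univ_inl] at this
    have := hgap i j hij
    omega
  · have := degOn_starForest_inr_le_one (univ \ S) p
    omega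

lemma equates_starForest_sdiff_centres (k : ℕ) :
    equates (starForest b) k (univ \ univ.map .inl) := by
  refine equates_of_forall_not_adj k ?_
  rintro (i | p) hv (j | q) hw <;> simp_all

lemma fk_starForest (hgap : ∀ i j : Fin t, i < j → b i + j < b j)
    (hbig : ∀ j : Fin t, j + 2 ≤ b j) : fk (starForest b) 2 = t := by
  have := fkOn_eq_card (subset_univ _) (equates_starForest_sdiff_centres 2)
    fun T _ hT => not_equates_starForest_sdiff hgap hbig (by simpa using hT)
  simpa [fk] using this

lemma maxDegOn_starForest {j : Fin t} (hj : ∀ i, b i ≤ b j) (hpos : 0 < b j) :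
    maxDegOn (starForest b) univ = b j := by
  refine maxDegOn_eq_of_forall_le (mem_univ (.inl j)) ?_ |>.trans (degOn_starForest_univ_inl j)
  rintro (i | p) -
  · simpa only [degOn_starForest_univ_inl] using hj i
  · rw [degOn_starForest_univ_inl]
    exact (degOn_starForest_inr_le_one _ p).trans hpos

end starForest

end SimpleGraph

lemma Nat.choose_two_add_one (n : ℕ) : (n + 1).choose 2 = n.choose 2 + n := by
  rw [Nat.choose_succ_succ', Nat.choose_one_right, add_comm]

lemma Nat.choose_two_add_lt {i j : ℕ} (h : i < j) : (i + 2).choose 2 + j < (j + 2).choose 2 := by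
  have := Nat.choose_le_choose 2 (show i + 2 ≤ j + 1 by omega)
  rw [Nat.choose_two_add_one (j + 1)]
  omega

/-- The paper's star sizes `a_j = C(j+1,2) + 1` for `j = 1, …, t-1`, shifted to `i = j - 1`,
followed by `Δ`. -/
def starSizes (t Δ : ℕ) (i : Fin t) : ℕ :=
  if (i : ℕ) + 1 < t then ((i : ℕ) + 2).choose 2 + 1 else Δ

section starSizes

variable {t Δ : ℕ} (hΔ : (t + 1).choose 2 + 1 ≤ Δ)
include hΔ

lemma le_starSizes (j : Fin t) : ((j : ℕ) + 2).choose 2 + 1 ≤ starSizes t Δ j := by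
  unfold starSizes
  split_ifs
  · exact le_rfl
  · rwa [show (j : ℕ) + 2 = t + 1 by omega]

lemma starSizes_add_lt {i j : Fin t} (h : i < j) : starSizes t Δ i + j < starSizes t Δ j := by
  have := le_starSizes hΔ j
  have := Nat.choose_two_add_lt (show (i : ℕ) < j from h)
  rw [starSizes, if_pos (by omega)]
  omega

lemma add_two_le_starSizes (j : Fin t) : j + 2 ≤ starSizes t Δ j := by
  have := le_starSizes hΔ j
  rw [Nat.choose_two_add_one] at this
  omega

lemma starSizes_le (i : Fin t) : starSizes t Δ i ≤ Δ := by
  unfold starSizes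
  split_ifs
  · have := Nat.choose_le_choose 2 (show (i : ℕ) + 2 ≤ t + 1 by omega)
    omega
  · exact le_rfl

end starSizes

open SimpleGraph in
theorem stmt6_general (t Δ : ℕ) (ht : 1 ≤ t)
    (hlo : Nat.choose (t + 1) 2 + 1 ≤ Δ) :
    ∃ (n : ℕ) (G : SimpleGraph (Fin n)),
      maxDegOn G Finset.univ = Δ ∧ fk G 2 = t := by
  let G := starForest (starSizes t Δ)
  let last : Fin t := ⟨t - 1, by omega⟩
  have hlast : starSizes t Δ last = Δ := if_neg (show ¬ t - 1 + 1 < t by omega)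
  refine ⟨_, G.overFin rfl, ?_, ?_⟩
  · rw [maxDegOn_univ_eq_of_iso (G.overFinIso rfl), maxDegOn_starForest (j := last), hlast]
    · exact fun i => hlast.symm ▸ starSizes_le hlo i
    · omega
  · exact (fk_eq_of_iso (G.overFinIso rfl) 2).trans
      (fk_starForest (fun _ _ => starSizes_add_lt hlo) (add_two_le_starSizes hlo))

/-- For every `t ≥ 1` and every `Δ` with `C(t+1,2) + 1 ≤ Δ ≤ C(t+2,2)`,
there is a finite simple graph `G` with maximum degree exactly `Δ` and `f(G) = t`. -/
theorem stmt6 (t Δ : ℕ) (ht : 1 ≤ t)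
    (hlo : Nat.choose (t + 1) 2 + 1 ≤ Δ) (hhi : Δ ≤ Nat.choose (t + 2) 2) :
    ∃ (n : ℕ) (G : SimpleGraph (Fin n)),
      maxDegOn G Finset.univ = Δ ∧ fk G 2 = t :=
  stmt6_general t Δ ht hlo
end
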